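/- Let (sₙ) be a bounded sequence of nonnegative reals with positive upper bound M ∈ ℕ, let (λₙ) ⊂ (0,1), and let (rₙ), (vₙ) be real sequences. Suppose L : ℕ → ℕ is monotone with Σ_{i=1}^{L(k)} λᵢ ≥ k for all k, and suppose s_{i+1} ≤ (1−λᵢ)(sᵢ+vᵢ) + λᵢ rᵢ for all i. If for given k, n, q ∈ ℕ we have vᵢ ≤ 1/(3(k+1)(q+1)) and rᵢ ≤ 1/(3(k+1)) for all i ∈ [n, q], then sᵢ ≤ 1/(k+1) for all i ∈ [σ(k,n), q], where σ(k,n) := L(n + ⌈ln(3M(k+1))⌉) + 1. -/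

import Mathlib

/-!
Unrolling the recursion from index `n` gives, with `P = ∏_{n ≤ j < i} (1 - λⱼ)`,
`sᵢ ≤ P sₙ + (i - n) b + (1 - P) c` whenever `vⱼ ≤ b` and `rⱼ ≤ c` on `[n, i)`.
Since `1 - λ ≤ exp (-λ)`, the product `P` is at most `exp (-∑_{n ≤ j < i} λⱼ)`, and the choice of
`L` makes that sum at least `log (3 M (k + 1))` once `i ≥ σ(k, n)`. Each of the three terms is
then at most `1 / (3 (k + 1))`.
-/

open Finset Real

theorem le_prod_mul_add_of_step_le {s lam r v : ℕ → ℝ} {b c : ℝ} (hb : 0 ≤ b) {n m : ℕ}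
    (hnm : n ≤ m) (hlam : ∀ j ∈ Ico n m, lam j ∈ Set.Icc (0 : ℝ) 1)
    (hstep : ∀ j ∈ Ico n m, s (j + 1) ≤ (1 - lam j) * (s j + v j) + lam j * r j)
    (hv : ∀ j ∈ Ico n m, v j ≤ b) (hr : ∀ j ∈ Ico n m, r j ≤ c) :
    s m ≤ (∏ j ∈ Ico n m, (1 - lam j)) * s n + ((m - n : ℕ) : ℝ) * b
      + (1 - ∏ j ∈ Ico n m, (1 - lam j)) * c := by
  induction m, hnm using Nat.le_induction with
  | base => simp
  | succ m hnm ih =>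
    have hm : m ∈ Ico n (m + 1) := mem_Ico.mpr ⟨hnm, m.lt_succ_self⟩
    have hsub : Ico n m ⊆ Ico n (m + 1) := Ico_subset_Ico_right m.le_succ
    have ih := ih (fun j hj => hlam j (hsub hj)) (fun j hj => hstep j (hsub hj))
      (fun j hj => hv j (hsub hj)) (fun j hj => hr j (hsub hj))
    obtain ⟨hlam0, hlam1⟩ := hlam m hm
    rw [prod_Ico_succ_top hnm, Nat.sub_add_comm hnm, Nat.cast_succ]
    set P := ∏ j ∈ Ico n m, (1 - lam j)
    set d : ℝ := ((m - n : ℕ) : ℝ)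
    have hd : 0 ≤ d := Nat.cast_nonneg _
    calc s (m + 1) ≤ (1 - lam m) * (s m + v m) + lam m * r m := hstep m hm
      _ ≤ (1 - lam m) * (P * s n + d * b + (1 - P) * c + b) + lam m * c := by
          have := add_le_add ih (hv m hm)
          have := hr m hm
          gcongr
      _ ≤ P * (1 - lam m) * s n + (d + 1) * b + (1 - P * (1 - lam m)) * c := by
          nlinarith [mul_nonneg hlam0 (mul_nonneg (by linarith : (0 : ℝ) ≤ d + 1) hb)]

theorem prod_one_sub_le_exp_neg_sum {lam : ℕ → ℝ} (t : Finset ℕ) (hlam : ∀ j ∈ t, lam j ≤ 1) :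
    ∏ j ∈ t, (1 - lam j) ≤ exp (-∑ j ∈ t, lam j) := by
  rw [← sum_neg_distrib, exp_sum]
  exact prod_le_prod (fun j hj => sub_nonneg.mpr (hlam j hj)) (fun j _ => one_sub_le_exp_neg _)

theorem prod_one_sub_le_inv_of_log_le_sum {lam : ℕ → ℝ} {x : ℝ} (hx : 0 < x) (t : Finset ℕ)
    (hlam : ∀ j ∈ t, lam j ≤ 1) (hsum : log x ≤ ∑ j ∈ t, lam j) :
    ∏ j ∈ t, (1 - lam j) ≤ x⁻¹ :=
  calc ∏ j ∈ t, (1 - lam j) ≤ exp (-∑ j ∈ t, lam j) := prod_one_sub_le_exp_neg_sum t hlam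
    _ ≤ exp (-log x) := exp_le_exp.mpr (neg_le_neg hsum)
    _ = x⁻¹ := by rw [exp_neg, exp_log hx]

theorem le_of_le_sum_Icc_one {lam : ℕ → ℝ} (hlam : ∀ j, lam j ≤ 1) {k N : ℕ}
    (h : (k : ℝ) ≤ ∑ j ∈ Icc 1 N, lam j) : k ≤ N := by
  have : ∑ j ∈ Icc 1 N, lam j ≤ N := by
    simpa using sum_le_card_nsmul (Icc 1 N) lam 1 (fun j _ => hlam j)
  exact_mod_cast h.trans this

theorem sum_Icc_one_le_add_sum_Ico {lam : ℕ → ℝ} (hlam : ∀ j, lam j ∈ Set.Icc (0 : ℝ) 1)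
    {N n i : ℕ} (hni : n ≤ i) (hNi : N < i) :
    ∑ j ∈ Icc 1 N, lam j ≤ n + ∑ j ∈ Ico n i, lam j := by
  have hsub : Icc 1 N ⊆ range i := fun j hj => by
    simp only [mem_Icc, mem_range] at hj ⊢; omega
  have hrange : ∑ j ∈ range n, lam j ≤ n := by
    simpa using sum_le_card_nsmul (range n) lam 1 (fun j _ => (hlam j).2)
  calc ∑ j ∈ Icc 1 N, lam j ≤ ∑ j ∈ range i, lam j :=
        sum_le_sum_of_subset_of_nonneg hsub (fun j _ _ => (hlam j).1)
    _ = ∑ j ∈ range n, lam j + ∑ j ∈ Ico n i, lam j := (sum_range_add_sum_Ico lam hni).symm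
    _ ≤ n + ∑ j ∈ Ico n i, lam j := by gcongr

theorem le_one_div_of_le_three_terms {x y P d M a Q : ℝ} (hM : 0 < M) (ha : 0 < a) (hQ : 0 < Q)
    (hP0 : 0 ≤ P) (hP : P ≤ (3 * M * a)⁻¹) (hy : y ≤ M) (hd : d ≤ Q)
    (h : x ≤ P * y + d * (1 / (3 * a * Q)) + (1 - P) * (1 / (3 * a))) : x ≤ 1 / a := by
  have hPy : P * y ≤ 1 / (3 * a) :=
    calc P * y ≤ P * M := mul_le_mul_of_nonneg_left hy hP0
      _ ≤ (3 * M * a)⁻¹ * M := mul_le_mul_of_nonneg_right hP hM.le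
      _ = 1 / (3 * a) := by field_simp
  have hdQ : d * (1 / (3 * a * Q)) ≤ 1 / (3 * a) :=
    calc d * (1 / (3 * a * Q)) ≤ Q * (1 / (3 * a * Q)) := by gcongr
      _ = 1 / (3 * a) := by field_simp
  have hc : (1 - P) * (1 / (3 * a)) ≤ 1 / (3 * a) :=
    mul_le_of_le_one_left (by positivity) (by linarith)
  calc x ≤ 3 * (1 / (3 * a)) := by linarith
    _ = 1 / a := by field_simp

theorem stmt4_general (s lam r v : ℕ → ℝ) (M : ℕ) (hM : 0 < M)
    (hsM : ∀ n, s n ≤ M)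
    (hlam : ∀ n, lam n ∈ Set.Ioo (0 : ℝ) 1)
    (L : ℕ → ℕ)
    (hL : ∀ k : ℕ, (k : ℝ) ≤ ∑ i ∈ Finset.Icc 1 (L k), lam i)
    (hrec : ∀ i, s (i + 1) ≤ (1 - lam i) * (s i + v i) + lam i * r i)
    (k n q : ℕ)
    (hv : ∀ i ∈ Finset.Icc n q, v i ≤ 1 / (3 * (k + 1) * (q + 1)))
    (hr : ∀ i ∈ Finset.Icc n q, r i ≤ 1 / (3 * (k + 1))) :
    ∀ i ∈ Finset.Icc (L (n + ⌈Real.log (3 * M * (k + 1))⌉₊) + 1) q,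
      s i ≤ 1 / (k + 1) := by
  intro i hi
  rw [mem_Icc] at hi
  set K := n + ⌈log (3 * M * (k + 1))⌉₊
  have hlam01 : ∀ j, lam j ∈ Set.Icc (0 : ℝ) 1 := fun j => Set.Ioo_subset_Icc_self (hlam j)
  have hKL : K ≤ L K := le_of_le_sum_Icc_one (fun j => (hlam01 j).2) (hL K)
  have hni : n ≤ i := by omega
  have hIco : Ico n i ⊆ Icc n q := Ico_subset_Icc_self.trans (Icc_subset_Icc_right hi.2)
  have hsum : log (3 * M * (k + 1)) ≤ ∑ j ∈ Ico n i, lam j := by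
    have hK := (hL K).trans (sum_Icc_one_le_add_sum_Ico hlam01 hni (by omega))
    have hceil := Nat.le_ceil (log (3 * M * (k + 1)))
    push_cast [K] at hK
    linarith
  have hP := prod_one_sub_le_inv_of_log_le_sum (by positivity) _ (fun j _ => (hlam01 j).2) hsum
  have hunroll := le_prod_mul_add_of_step_le (by positivity) hni (fun j _ => hlam01 j)
    (fun j _ => hrec j) (fun j hj => hv j (hIco hj)) (fun j hj => hr j (hIco hj))
  refine le_one_div_of_le_three_terms (by exact_mod_cast hM) (by positivity) (by positivity)
    (prod_nonneg fun j _ => sub_nonneg.mpr (hlam01 j).2) hP (hsM n) ?_ hunroll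
  exact_mod_cast (by omega : i - n ≤ q + 1)

theorem stmt4 (s lam r v : ℕ → ℝ) (M : ℕ) (hM : 0 < M)
    (hs : ∀ n, 0 ≤ s n) (hsM : ∀ n, s n ≤ M)
    (hlam : ∀ n, lam n ∈ Set.Ioo (0 : ℝ) 1)
    (L : ℕ → ℕ) (hLmono : Monotone L)
    (hL : ∀ k : ℕ, (k : ℝ) ≤ ∑ i ∈ Finset.Icc 1 (L k), lam i)
    (hrec : ∀ i, s (i + 1) ≤ (1 - lam i) * (s i + v i) + lam i * r i)
    (k n q : ℕ)
    (hv : ∀ i ∈ Finset.Icc n q, v i ≤ 1 / (3 * (k + 1) * (q + 1)))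
    (hr : ∀ i ∈ Finset.Icc n q, r i ≤ 1 / (3 * (k + 1))) :
    ∀ i ∈ Finset.Icc (L (n + ⌈Real.log (3 * M * (k + 1))⌉₊) + 1) q,
      s i ≤ 1 / (k + 1) :=
  stmt4_general s lam r v M hM hsM hlam L hL hrec k n q hv hr
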